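/- Let $0 < H < 1/2$ and let $\ell(y) = (f^{-1})'(y)$ for $y < 0$, where $f^{-1}$ is the inverse of the restriction of $f(s) = \frac{1}{\Gamma(H+1/2)}[(1-s)_+^{H-1/2} - (-s)_+^{H-1/2}]$ to $(-\infty,0)$. Then $\ell(y) \sim -\hat{c}_H\, (-y)^{-(5-2H)/(3-2H)}$ as $y \to 0^-$, where $\hat{c}_H = \frac{2}{3-2H}\left(\frac{1-2H}{2\Gamma(H+1/2)}\right)^{2/(3-2H)}$. -/

import Mathlib

/-! Write `f = mvnKernel1 H`, `a = H - 1/2 < 0` and `q = (1 - 2H)/(2Γ(H+1/2)) > 0`. As `u → ∞`,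
`(u + 1)^e - u^e ~ e u^(e-1)`, so `-f(-u) ~ q u^(a-1)` and `f'(-u) ~ q (a-1) u^(a-2)`; eliminating
`u` between these two gives `1/f'(-u) ~ -ĉ_H (-f(-u))^(-(5-2H)/(3-2H))`. Since `f` is negative and
decreasing on `(-∞, 0)`, `u = -f⁻¹(y) → ∞` as `y → 0⁻`, and substituting it turns this into the
claim, because `ℓ(y) = 1/f'(f⁻¹(y))` and `y = f(f⁻¹(y))`. -/
open Filter

/-- The Mandelbrot–Van Ness kernel at `t = 1`. -/
noncomputable def mvnKernel1 (H s : ℝ) : ℝ :=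
  (1 / Real.Gamma (H + 1/2)) *
    ((max (1 - s) 0) ^ (H - 1/2) - (max (-s) 0) ^ (H - 1/2))

open Asymptotics Real Set Topology

theorem HasDerivAt.eq_inv_of_leftInverse {𝕜 : Type*} [NontriviallyNormedField 𝕜]
    {f g : 𝕜 → 𝕜} {f' g' x : 𝕜} (hf : HasDerivAt f f' x) (hg : HasDerivAt g g' (f x))
    (hgf : ∀ᶠ t in 𝓝 x, g (f t) = t) : g' = f'⁻¹ :=
  eq_inv_of_mul_eq_one_left <|
    (hg.comp x hf).unique <| (hasDerivAt_id x).congr_of_eventuallyEq hgf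

theorem tendsto_nhdsLT_atBot_of_rightInverse {f g : ℝ → ℝ} (hf : AntitoneOn f (Iio 0))
    (hf_neg : ∀ s < 0, f s < 0) (hg_neg : ∀ y < 0, g y < 0) (hfg : ∀ y < 0, f (g y) = y) :
    Tendsto g (𝓝[<] 0) atBot := by
  refine tendsto_atBot.2 fun b => ?_
  have hM : min b (-1) < 0 := (min_le_right _ _).trans_lt (by norm_num)
  filter_upwards [Ioo_mem_nhdsLT (hf_neg _ hM)] with y ⟨hMy, hy⟩
  by_contra! hb
  have := hf hM (hg_neg y hy) ((min_le_left _ _).trans hb.le)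
  rw [hfg y hy] at this
  exact this.not_gt hMy

theorem Asymptotics.IsEquivalent.rpow_of_eventually_nonneg {α : Type*} {l : Filter α}
    {u v : α → ℝ} (h : u ~[l] v) (hv : ∀ᶠ x in l, 0 ≤ v x) (r : ℝ) :
    u ^ r ~[l] v ^ r := by
  have hv' : v =ᶠ[l] fun x => max (v x) 0 := hv.mono fun x hx => (max_eq_left hx).symm
  refine ((h.congr_right hv').rpow (fun x => le_max_right _ _)).congr_right ?_
  filter_upwards [hv'] with x hx
  change max (v x) 0 ^ r = v x ^ r
  rw [← hx]

theorem isEquivalent_one_add_rpow_sub_one {e : ℝ} (he : e ≠ 0) :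
    (fun x : ℝ => (1 + x) ^ e - 1) ~[𝓝 0] fun x => e * x := by
  have hderiv : HasDerivAt (fun x : ℝ => (1 + x) ^ e) e 0 := by
    simpa using ((hasDerivAt_id (0 : ℝ)).const_add 1).rpow_const (p := e) (by simp)
  have := hasDerivAt_iff_isLittleO_nhds_zero.1 hderiv
  refine IsLittleO.trans_isBigO ?_ (isBigO_self_const_mul he _ _)
  change (fun x : ℝ => (1 + x) ^ e - 1 - e * x) =o[𝓝 0] fun x => x
  simpa [mul_comm] using this

theorem isEquivalent_add_one_rpow_sub_rpow {e : ℝ} (he : e ≠ 0) :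
    (fun u : ℝ => (u + 1) ^ e - u ^ e) ~[atTop] fun u => e * u ^ (e - 1) := by
  have h := (isEquivalent_one_add_rpow_sub_one he).comp_tendsto tendsto_inv_atTop_zero
  refine ((IsEquivalent.refl (u := fun u : ℝ => u ^ e)).mul h).congr_left ?_ |>.congr_right ?_
  · filter_upwards [eventually_gt_atTop 0] with u hu
    simp only [Function.comp_apply, Pi.mul_apply]
    rw [mul_sub, mul_one, ← mul_rpow hu.le (by positivity), mul_add, mul_inv_cancel₀ hu.ne',
      mul_one, add_comm]
  · filter_upwards [eventually_gt_atTop 0] with u hu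
    simp only [Function.comp_apply, Pi.mul_apply]
    rw [rpow_sub_one hu.ne']
    ring

theorem one_sub_two_mul_div_two_mul_Gamma_pos {H : ℝ} (hH₀ : -1/2 < H) (hH₁ : H < 1/2) :
    0 < (1 - 2*H) / (2 * Gamma (H + 1/2)) :=
  div_pos (by linarith) (mul_pos two_pos (Gamma_pos_of_pos (by linarith)))

theorem mvnKernel1_of_neg (H : ℝ) {s : ℝ} (hs : s < 0) :
    mvnKernel1 H s = 1 / Gamma (H + 1/2) * ((1 - s) ^ (H - 1/2) - (-s) ^ (H - 1/2)) := by
  rw [mvnKernel1, max_eq_left (by linarith), max_eq_left (by linarith)]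

theorem mvnKernel1_nonneg {H s : ℝ} (hH₀ : -1/2 < H) (hH₁ : H < 1/2) (hs : 0 ≤ s) :
    0 ≤ mvnKernel1 H s := by
  have hΓ : 0 < Gamma (H + 1/2) := Gamma_pos_of_pos (by linarith)
  rw [mvnKernel1, max_eq_right (by linarith : -s ≤ 0), zero_rpow (by linarith), sub_zero]
  positivity

theorem mvnKernel1_neg {H s : ℝ} (hH₀ : -1/2 < H) (hH₁ : H < 1/2) (hs : s < 0) :
    mvnKernel1 H s < 0 := by
  have hΓ : 0 < Gamma (H + 1/2) := Gamma_pos_of_pos (by linarith)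
  rw [mvnKernel1_of_neg H hs]
  have := rpow_lt_rpow_of_neg (neg_pos.2 hs) (by linarith : -s < 1 - s) (by linarith : H - 1/2 < 0)
  exact mul_neg_of_pos_of_neg (by positivity) (by linarith)

theorem hasDerivAt_mvnKernel1_of_neg (H : ℝ) {s : ℝ} (hs : s < 0) :
    HasDerivAt (mvnKernel1 H)
      ((1/2 - H) / Gamma (H + 1/2) * ((1 - s) ^ (H - 3/2) - (-s) ^ (H - 3/2))) s := by
  have h₁ := ((hasDerivAt_id' s).const_sub 1).rpow_const (p := H - 1/2) (Or.inl (by linarith))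
  have h₂ := (hasDerivAt_neg' s).rpow_const (p := H - 1/2) (Or.inl (by linarith))
  refine ((h₁.sub h₂).const_mul (1 / Gamma (H + 1/2))).congr_of_eventuallyEq ?_ |>.congr_deriv ?_
  · filter_upwards [Iio_mem_nhds hs] with t ht
    exact mvnKernel1_of_neg H ht
  · rw [show H - 1/2 - 1 = H - 3/2 by ring]
    ring

theorem antitoneOn_mvnKernel1 {H : ℝ} (hH₀ : -1/2 < H) (hH₁ : H < 1/2) :
    AntitoneOn (mvnKernel1 H) (Iio 0) := by
  have hΓ : 0 < Gamma (H + 1/2) := Gamma_pos_of_pos (by linarith)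
  refine antitoneOn_of_deriv_nonpos (convex_Iio 0)
    (fun s hs => (hasDerivAt_mvnKernel1_of_neg H hs).continuousAt.continuousWithinAt)
    (fun s hs => ?_) fun s hs => ?_ <;> rw [interior_Iio] at hs
  · exact (hasDerivAt_mvnKernel1_of_neg H hs).differentiableAt.differentiableWithinAt
  rw [(hasDerivAt_mvnKernel1_of_neg H hs).deriv]
  have := rpow_lt_rpow_of_neg (neg_pos.2 hs) (by linarith : -s < 1 - s) (by linarith : H - 3/2 < 0)
  exact mul_nonpos_of_nonneg_of_nonpos (div_nonneg (by linarith) hΓ.le) (by linarith)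

theorem isEquivalent_neg_mvnKernel1_neg {H : ℝ} (hH : H ≠ 1/2) :
    (fun u => -mvnKernel1 H (-u)) ~[atTop]
      fun u => (1 - 2*H) / (2 * Gamma (H + 1/2)) * u ^ (H - 3/2) := by
  have h := (isEquivalent_add_one_rpow_sub_rpow (e := H - 1/2) (sub_ne_zero.2 hH))
  refine ((IsEquivalent.refl (u := fun _ => -(1 / Gamma (H + 1/2)))).mul h).congr_left ?_
    |>.congr_right ?_
  · filter_upwards [eventually_gt_atTop 0] with u hu
    simp only [Pi.mul_apply, mvnKernel1_of_neg H (neg_neg_of_pos hu), neg_neg, sub_neg_eq_add,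
      add_comm 1 u]
    ring
  · refine .of_eq (funext fun u => ?_)
    simp only [Pi.mul_apply]
    rw [show H - 1/2 - 1 = H - 3/2 by ring]
    ring

theorem isEquivalent_deriv_mvnKernel1_neg {H : ℝ} (hH : H ≠ 3/2) :
    (fun u => deriv (mvnKernel1 H) (-u)) ~[atTop]
      fun u => (1 - 2*H) / (2 * Gamma (H + 1/2)) * (H - 3/2) * u ^ (H - 5/2) := by
  have h := (isEquivalent_add_one_rpow_sub_rpow (e := H - 3/2) (sub_ne_zero.2 hH))
  refine ((IsEquivalent.refl (u := fun _ => (1/2 - H) / Gamma (H + 1/2))).mul h).congr_left ?_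
    |>.congr_right ?_
  · filter_upwards [eventually_gt_atTop 0] with u hu
    simp only [Pi.mul_apply, (hasDerivAt_mvnKernel1_of_neg H (neg_neg_of_pos hu)).deriv, neg_neg,
      sub_neg_eq_add, add_comm 1 u]
  · refine .of_eq (funext fun u => ?_)
    simp only [Pi.mul_apply]
    rw [show H - 3/2 - 1 = H - 5/2 by ring]
    ring

theorem inv_mul_rpow_eq_neg_mul_rpow {q u H : ℝ} (hq : 0 < q) (hu : 0 < u) (hH : H < 3/2) :
    (q * (H - 3/2) * u ^ (H - 5/2))⁻¹ =
      -(2 / (3 - 2*H) * q ^ (2 / (3 - 2*H))) * (q * u ^ (H - 3/2)) ^ (-(5 - 2*H) / (3 - 2*H)) := by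
  have hk : 3 - 2*H ≠ 0 := by linarith
  have hq_pow : q ^ (2 / (3 - 2*H)) * q ^ (-(5 - 2*H) / (3 - 2*H)) = q⁻¹ := by
    rw [← rpow_add hq, show 2 / (3 - 2*H) + -(5 - 2*H) / (3 - 2*H) = -1 by field_simp; ring,
      rpow_neg_one]
  have hu_pow : (u ^ (H - 3/2)) ^ (-(5 - 2*H) / (3 - 2*H)) = (u ^ (H - 5/2))⁻¹ := by
    rw [← rpow_mul hu.le, ← rpow_neg hu.le]
    congr 1
    rw [mul_div_assoc', div_eq_iff hk]
    ring
  rw [mul_rpow hq.le (rpow_nonneg hu.le _), hu_pow]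
  calc (q * (H - 3/2) * u ^ (H - 5/2))⁻¹
      = -(2 / (3 - 2*H)) * q⁻¹ * (u ^ (H - 5/2))⁻¹ := by
        rw [mul_inv, mul_inv, show H - 3/2 = -((3 - 2*H) / 2) by ring, inv_neg, inv_div]
        ring
    _ = _ := by
        rw [← hq_pow]
        ring

theorem isEquivalent_inv_deriv_mvnKernel1_neg {H : ℝ} (hH₀ : -1/2 < H) (hH₁ : H < 1/2) :
    (fun u => (deriv (mvnKernel1 H) (-u))⁻¹) ~[atTop] fun u =>
      -(2 / (3 - 2*H) * ((1 - 2*H) / (2 * Gamma (H + 1/2))) ^ (2 / (3 - 2*H))) *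
        (-mvnKernel1 H (-u)) ^ (-(5 - 2*H) / (3 - 2*H)) := by
  have hq := one_sub_two_mul_div_two_mul_Gamma_pos hH₀ hH₁
  have hkernel := (isEquivalent_neg_mvnKernel1_neg hH₁.ne).rpow_of_eventually_nonneg
    ((eventually_ge_atTop 0).mono fun u hu => mul_nonneg hq.le (rpow_nonneg hu _))
    (-(5 - 2*H) / (3 - 2*H))
  refine (isEquivalent_deriv_mvnKernel1_neg (by linarith)).inv.congr_right ?_
    |>.trans (IsEquivalent.refl.mul hkernel).symm
  filter_upwards [eventually_gt_atTop 0] with u hu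
  exact inv_mul_rpow_eq_neg_mul_rpow hq hu (by linarith)

/-- For `0 < H < 1/2`, if `finv` is the inverse of the restriction of the kernel
`f` to `(-∞,0)` and `ℓ(y) = (f⁻¹)'(y)` for `y < 0`, then
`ℓ(y) ∼ -ĉ_H (-y)^{-(5-2H)/(3-2H)}` as `y → 0⁻`, where
`ĉ_H = (2/(3-2H)) ((1-2H)/(2Γ(H+1/2)))^{2/(3-2H)}`. -/
theorem ell_asymp_zero_left (H : ℝ) (hH0 : 0 < H) (hH1 : H < 1/2)
    (finv ell : ℝ → ℝ)
    (hleft : ∀ s < (0:ℝ), finv (mvnKernel1 H s) = s)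
    (hright : ∀ y < (0:ℝ), mvnKernel1 H (finv y) = y)
    (hder : ∀ y < (0:ℝ), HasDerivAt finv (ell y) y) :
    Tendsto (fun y : ℝ =>
        ell y / (-((2 / (3 - 2*H)) *
            ((1 - 2*H) / (2 * Real.Gamma (H + 1/2))) ^ (2 / (3 - 2*H))) *
          (-y) ^ (-(5 - 2*H) / (3 - 2*H))))
      (nhdsWithin 0 (Set.Iio 0)) (nhds 1) := by
  have hH₀ : -1/2 < H := by linarith
  have hfinv_neg : ∀ y < 0, finv y < 0 := fun y hy =>
    not_le.1 fun h => (hright y hy ▸ mvnKernel1_nonneg hH₀ hH1 h).not_gt hy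
  have hu : Tendsto (fun y => -finv y) (𝓝[<] 0) atTop :=
    tendsto_neg_atBot_atTop.comp <| tendsto_nhdsLT_atBot_of_rightInverse
      (antitoneOn_mvnKernel1 hH₀ hH1) (fun s => mvnKernel1_neg hH₀ hH1) hfinv_neg hright
  have hequiv : ell ~[𝓝[<] 0] fun y =>
      -(2 / (3 - 2*H) * ((1 - 2*H) / (2 * Gamma (H + 1/2))) ^ (2 / (3 - 2*H))) *
        (-y) ^ (-(5 - 2*H) / (3 - 2*H)) := by
    refine ((isEquivalent_inv_deriv_mvnKernel1_neg hH₀ hH1).comp_tendsto hu).congr_left ?_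
      |>.congr_right ?_ <;> filter_upwards [self_mem_nhdsWithin] with y hy
    · have hf := hasDerivAt_mvnKernel1_of_neg H (hfinv_neg y hy)
      rw [Function.comp_apply, neg_neg, hf.deriv]
      refine (hf.eq_inv_of_leftInverse (by rw [hright y hy]; exact hder y hy) ?_).symm
      filter_upwards [Iio_mem_nhds (hfinv_neg y hy)] with s hs using hleft s hs
    · rw [Function.comp_apply, neg_neg, hright y hy]
  refine (isEquivalent_iff_tendsto_one ?_).mp hequiv
  filter_upwards [self_mem_nhdsWithin] with y hy
  have hq := one_sub_two_mul_div_two_mul_Gamma_pos hH₀ hH1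
  exact mul_ne_zero (neg_ne_zero.2 (mul_pos (div_pos two_pos (by linarith))
    (rpow_pos_of_pos hq _)).ne') (rpow_pos_of_pos (neg_pos.2 hy) _).ne'
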